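/- arXiv:1511.03513 — 6 statements merged into one kernel-verified Lean document; each statement's English description precedes it below -/
import Mathlib

section
/- For every 0 ≤ l ≤ n-1, the two numbers λ_l^± = cos(2πjl/n) + cos(2πkl/n) ± sqrt((cos(2πjl/n) - cos(2πkl/n))² + 1) are eigenvalues of the adjacency matrix of the I-graph I(n,j,k); in particular the vector w_l = (a_l v_l, v_l) with a_l = λ_l^± - 2cos(2πjl/n) and v_l = (1, ξ^l, ..., ξ^{(n-1)l})^T is a corresponding eigenvector. -/
open Matrix

lemma zpow_mod (n : ℕ) [NeZero n] (a : ℕ) :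
    Complex.exp (2 * Real.pi * Complex.I / n) ^ a
      = Complex.exp (2 * Real.pi * Complex.I / n) ^ (a % n) := by
  conv_lhs => rw [← Nat.div_add_mod a n]
  rw [pow_add, pow_mul]
  have h : Complex.exp (2 * Real.pi * Complex.I / n) ^ n = 1 := by
    rw [← Complex.exp_nat_mul]
    rw [show (n : ℂ) * (2 * Real.pi * Complex.I / n) = 2 * Real.pi * Complex.I by
      have : (n:ℂ) ≠ 0 := Nat.cast_ne_zero.2 (NeZero.ne n)
      field_simp]
    exact Complex.exp_two_pi_mul_I
  simp [h]

lemma zpow_congr (n : ℕ) [NeZero n] {a b : ℕ} (h : a % n = b % n) :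
    Complex.exp (2 * Real.pi * Complex.I / n) ^ a
      = Complex.exp (2 * Real.pi * Complex.I / n) ^ b := by
  rw [zpow_mod n a, zpow_mod n b, h]

lemma zpow_exp (n : ℕ) [NeZero n] (m : ℕ) :
    Complex.exp (2 * Real.pi * Complex.I / n) ^ m
      = Complex.exp (((2 * Real.pi * m / n : ℝ) : ℂ) * Complex.I) := by
  rw [← Complex.exp_nat_mul]
  congr 1
  push_cast
  ring

lemma f_shift (n : ℕ) [NeZero n] (l : ℕ) (t c : ZMod n) :
    Complex.exp (2 * Real.pi * Complex.I / n) ^ ((t + c).val * l)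
      = Complex.exp (2 * Real.pi * Complex.I / n) ^ (t.val * l)
        * Complex.exp (2 * Real.pi * Complex.I / n) ^ (c.val * l) := by
  rw [← pow_add, ← add_mul]
  apply zpow_congr n
  have h1 : (t + c).val % n = (t.val + c.val) % n := by
    rw [ZMod.val_add]; exact Nat.mod_mod_of_dvd _ dvd_rfl
  exact (Nat.ModEq.mul_right l (h1 : _ ≡ _ [MOD n]))

lemma exp_pair (n : ℕ) [NeZero n] (c l : ℕ) (hc : c < n) :
    Complex.exp (2 * Real.pi * Complex.I / n) ^ (((c : ZMod n)).val * l) +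
    Complex.exp (2 * Real.pi * Complex.I / n) ^ ((-(c : ZMod n)).val * l) =
    2 * (Real.cos (2 * Real.pi * c * l / n) : ℂ) := by
  have hval : ((c : ZMod n)).val = c := by
    rw [ZMod.val_natCast]; exact Nat.mod_eq_of_lt hc
  set ζ := Complex.exp (2 * Real.pi * Complex.I / n) with hζ
  set θ : ℝ := 2 * Real.pi * c * l / n with hθ
  have hE : ζ ^ (((c : ZMod n)).val * l) = Complex.exp ((θ : ℂ) * Complex.I) := by
    rw [hval, hζ, zpow_exp n (c*l)]
    congr 1
    push_cast [hθ]
    ring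
  have hmul : ζ ^ (((c : ZMod n)).val * l) * ζ ^ ((-(c : ZMod n)).val * l) = 1 := by
    rw [← pow_add, ← add_mul]
    have h0 : (((c:ZMod n)).val + (-(c:ZMod n)).val) % n = 0 := by
      have h := ZMod.val_add (c : ZMod n) (-(c:ZMod n))
      rw [add_neg_cancel, ZMod.val_zero] at h
      omega
    rw [zpow_congr n (b := 0) (by
      have := Nat.ModEq.mul_right l (show (((c:ZMod n)).val + (-(c:ZMod n)).val) ≡ 0 [MOD n] by
        unfold Nat.ModEq; simpa using h0)
      rw [zero_mul] at this; exact this)]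
    simp
  have hE' : ζ ^ ((-(c : ZMod n)).val * l) = Complex.exp (-((θ : ℂ) * Complex.I)) := by
    rw [Complex.exp_neg, ← hE]
    exact (inv_eq_of_mul_eq_one_right hmul).symm
  rw [hE, hE', ← neg_mul, Complex.exp_mul_I, Complex.exp_mul_I, Complex.cos_neg,
    Complex.sin_neg, ← Complex.ofReal_cos]
  ring

lemma sum_cond (n : ℕ) [NeZero n] (c : ZMod n) (hc : c ≠ 0) (hc2 : c + c ≠ 0)
    (i : ZMod n) (g : ZMod n → ℂ) :
    (∑ i' : ZMod n, (if i ≠ i' ∧ (i' - i = c ∨ i - i' = c) then (1:ℂ) else 0) * g i')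
      = g (i + c) + g (i + -c) := by
  have hne : i + c ≠ i + -c := by
    intro h
    apply hc2
    have := add_left_cancel h
    linear_combination this
  have key : ∀ i' : ZMod n, (i ≠ i' ∧ (i' - i = c ∨ i - i' = c)) ↔ (i' = i + c ∨ i' = i + -c) := by
    intro i'
    constructor
    · rintro ⟨h1, h2 | h2⟩
      · left; linear_combination h2
      · right; linear_combination -h2
    · rintro (rfl | rfl)
      · exact ⟨by simpa using hc.symm ∘ (by intro h; linear_combination -h), Or.inl (by ring)⟩
      · refine ⟨?_, Or.inr (by ring)⟩
        intro h
        exact hc (by linear_combination h)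
  simp only [key]
  have split : ∀ i' : ZMod n,
      (if i' = i + c ∨ i' = i + -c then (1:ℂ) else 0) * g i'
        = (if i' = i + c then (1:ℂ) else 0) * g i'
          + (if i' = i + -c then (1:ℂ) else 0) * g i' := by
    intro i'
    have hcc : c ≠ -c := fun h => hne (by rw [← h])
    by_cases h1 : i' = i + c <;> by_cases h2 : i' = i + -c <;>
      simp [h1, h2, hcc, hcc.symm]
  simp only [split, Finset.sum_add_distrib]
  congr 1 <;> simp [Finset.sum_ite_eq', ite_mul]

lemma sum_diag (n : ℕ) [NeZero n] (i : ZMod n) (g : ZMod n → ℂ) :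
    (∑ i' : ZMod n, (if i = i' then (1:ℂ) else 0) * g i') = g i := by
  simp [Finset.sum_ite_eq, ite_mul]


/-- The I-graph `I(n,j,k)`: vertices are `ZMod n ⊕ ZMod n`, where `Sum.inl i`
represents `b_i` and `Sum.inr i` represents `a_i`; edges are `{b_i, b_{i+k}}`,
`{a_i, a_{i+j}}` and `{a_i, b_i}` (indices mod `n`). -/
def IGraph (n j k : ℕ) : SimpleGraph (ZMod n ⊕ ZMod n) where
  Adj x y :=
    match x, y with
    | .inl i, .inl i' => i ≠ i' ∧ (i' - i = (k : ZMod n) ∨ i - i' = (k : ZMod n))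
    | .inr i, .inr i' => i ≠ i' ∧ (i' - i = (j : ZMod n) ∨ i - i' = (j : ZMod n))
    | .inl i, .inr i' => i = i'
    | .inr i, .inl i' => i = i'
  symm := by
    constructor
    rintro (i | i) (i' | i') h
    · exact ⟨h.1.symm, h.2.symm⟩
    · exact h.symm
    · exact h.symm
    · exact ⟨h.1.symm, h.2.symm⟩
  loopless := by
    constructor
    rintro (i | i) h <;> exact h.1 rfl

instance (n j k : ℕ) : DecidableRel (IGraph n j k).Adj := fun x y =>
  match x, y with
  | .inl i, .inl i' =>
      inferInstanceAs (Decidable (i ≠ i' ∧ (i' - i = (k : ZMod n) ∨ i - i' = (k : ZMod n))))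
  | .inr i, .inr i' =>
      inferInstanceAs (Decidable (i ≠ i' ∧ (i' - i = (j : ZMod n) ∨ i - i' = (j : ZMod n))))
  | .inl i, .inr i' => inferInstanceAs (Decidable (i = i'))
  | .inr i, .inl i' => inferInstanceAs (Decidable (i = i'))

/-- For every `0 ≤ l ≤ n-1`, the numbers
`λ_l^± = cos(2πjl/n) + cos(2πkl/n) ± √((cos(2πjl/n) - cos(2πkl/n))² + 1)`
are eigenvalues of the adjacency matrix of `I(n,j,k)`, with eigenvector
`w_l = (a_l v_l, v_l)`, `a_l = λ_l^± - 2cos(2πjl/n)`, `v_l = (1, ξ^l, …, ξ^((n-1)l))ᵀ`. -/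
theorem IGraph_eigen (n j k : ℕ) [NeZero n] (hn : 3 ≤ n) (hj : 1 ≤ j) (hjk : j ≤ k)
    (hk : 2 * k < n) (l : ℕ) (hl : l < n) :
    ∀ s : ℝ, s = 1 ∨ s = -1 →
      (IGraph n j k).adjMatrix ℂ *ᵥ
        (Sum.elim
          (fun t : ZMod n =>
            (((Real.cos (2 * Real.pi * j * l / n) + Real.cos (2 * Real.pi * k * l / n) +
                s * Real.sqrt ((Real.cos (2 * Real.pi * j * l / n) -
                  Real.cos (2 * Real.pi * k * l / n)) ^ 2 + 1)) -
              2 * Real.cos (2 * Real.pi * j * l / n) : ℝ) : ℂ) *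
              Complex.exp (2 * Real.pi * Complex.I / n) ^ (t.val * l))
          (fun t : ZMod n => Complex.exp (2 * Real.pi * Complex.I / n) ^ (t.val * l)))
      = (((Real.cos (2 * Real.pi * j * l / n) + Real.cos (2 * Real.pi * k * l / n) +
            s * Real.sqrt ((Real.cos (2 * Real.pi * j * l / n) -
              Real.cos (2 * Real.pi * k * l / n)) ^ 2 + 1) : ℝ) : ℂ)) •
        (Sum.elim
          (fun t : ZMod n =>
            (((Real.cos (2 * Real.pi * j * l / n) + Real.cos (2 * Real.pi * k * l / n) +
                s * Real.sqrt ((Real.cos (2 * Real.pi * j * l / n) -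
                  Real.cos (2 * Real.pi * k * l / n)) ^ 2 + 1)) -
              2 * Real.cos (2 * Real.pi * j * l / n) : ℝ) : ℂ) *
              Complex.exp (2 * Real.pi * Complex.I / n) ^ (t.val * l))
          (fun t : ZMod n => Complex.exp (2 * Real.pi * Complex.I / n) ^ (t.val * l))) := by
  intro s hs
  set cj := Real.cos (2 * Real.pi * j * l / n) with hcjdef
  set ck := Real.cos (2 * Real.pi * k * l / n) with hckdef
  set D := Real.sqrt ((cj - ck) ^ 2 + 1) with hDdef
  set lam := cj + ck + s * D with hlamdef
  -- real algebraic identity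
  have hD2 : D ^ 2 = (cj - ck) ^ 2 + 1 := Real.sq_sqrt (by positivity)
  have hs2 : s ^ 2 = 1 := by rcases hs with rfl | rfl <;> norm_num
  have h1 : lam * (lam - 2 * cj) = 2 * ck * (lam - 2 * cj) + 1 := by
    rw [hlamdef]; nlinarith [hD2, hs2]
  have h1c : (lam : ℂ) * ((lam : ℂ) - 2 * (cj : ℂ))
      = 2 * (ck : ℂ) * ((lam : ℂ) - 2 * (cj : ℂ)) + 1 := by exact_mod_cast h1
  -- ZMod facts
  have hndvd : ∀ m : ℕ, 0 < m → m < n → (m : ZMod n) ≠ 0 := by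
    intro m h0 h1 h
    rw [ZMod.natCast_eq_zero_iff] at h
    exact absurd (Nat.le_of_dvd h0 h) (by omega)
  have hkZ : (k : ZMod n) ≠ 0 := hndvd k (by omega) (by omega)
  have hjZ : (j : ZMod n) ≠ 0 := hndvd j (by omega) (by omega)
  have hk2Z : (k : ZMod n) + (k : ZMod n) ≠ 0 := by
    have : ((2 * k : ℕ) : ZMod n) ≠ 0 := hndvd (2 * k) (by omega) hk
    intro h; apply this; push_cast; linear_combination h
  have hj2Z : (j : ZMod n) + (j : ZMod n) ≠ 0 := by
    have : ((2 * j : ℕ) : ZMod n) ≠ 0 := hndvd (2 * j) (by omega) (by omega)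
    intro h; apply this; push_cast; linear_combination h
  have hEk := exp_pair n k l (by omega)
  have hEj := exp_pair n j l (by omega)
  rw [← hckdef] at hEk
  rw [← hcjdef] at hEj
  funext x
  cases x with
  | inl i =>
      simp only [Matrix.mulVec, dotProduct, Fintype.sum_sum_type,
        SimpleGraph.adjMatrix_apply, Sum.elim_inl, Sum.elim_inr, Pi.smul_apply,
        smul_eq_mul]
      simp only [IGraph]
      erw [sum_cond n (k : ZMod n) hkZ hk2Z i, sum_diag n i, f_shift n l i (k : ZMod n),
        f_shift n l i (-(k : ZMod n))]
      push_cast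
      linear_combination (((lam : ℂ) - 2 * (cj:ℂ)) *
          Complex.exp (2 * Real.pi * Complex.I / n) ^ (i.val * l)) * hEk
        - Complex.exp (2 * Real.pi * Complex.I / n) ^ (i.val * l) * h1c
  | inr i =>
      simp only [Matrix.mulVec, dotProduct, Fintype.sum_sum_type,
        SimpleGraph.adjMatrix_apply, Sum.elim_inl, Sum.elim_inr, Pi.smul_apply,
        smul_eq_mul]
      simp only [IGraph]
      erw [sum_cond n (j : ZMod n) hjZ hj2Z i, sum_diag n i, f_shift n l i (j : ZMod n),
        f_shift n l i (-(j : ZMod n))]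
      push_cast
      linear_combination Complex.exp (2 * Real.pi * Complex.I / n) ^ (i.val * l) * hEj
end

section
/- The 2n eigenvalues of the I-graph I(n,j,k) (with multiplicity) are exactly the roots of the n quadratic equations (λ - β_l)(λ - α_l) = 1, for 0 ≤ l ≤ n-1, where α_l = 2cos(2πjl/n) and β_l = 2cos(2πkl/n). -/
open Matrix Polynomial

open Matrix

section AuxIGraph

open Matrix Polynomial

/-- The primitive `n`-th root of unity `exp(2πi/n)`. -/
noncomputable def ww (n : ℕ) : ℂ := Complex.exp (2 * Real.pi * Complex.I / n)

lemma ww_pow_n (n : ℕ) [NeZero n] : ww n ^ n = 1 := by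
  have hn : (n : ℂ) ≠ 0 := Nat.cast_ne_zero.mpr (NeZero.ne n)
  rw [ww, ← Complex.exp_nat_mul,
    show (n : ℂ) * (2 * Real.pi * Complex.I / n) = 2 * Real.pi * Complex.I by field_simp,
    Complex.exp_two_pi_mul_I]

lemma ww_pow_mod (n : ℕ) [NeZero n] (m : ℕ) : ww n ^ (m % n) = ww n ^ m := by
  conv_rhs => rw [← Nat.div_add_mod m n]
  rw [pow_add, pow_mul, ww_pow_n, one_pow, one_mul]

/-- The additive character `a ↦ ω^a` on `ZMod n`. -/
noncomputable def ee (n : ℕ) [NeZero n] (a : ZMod n) : ℂ := ww n ^ a.val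

lemma ee_add (n : ℕ) [NeZero n] (a b : ZMod n) : ee n (a + b) = ee n a * ee n b := by
  rw [ee, ZMod.val_add, ww_pow_mod, pow_add]; rfl

lemma ee_natCast (n : ℕ) [NeZero n] (m : ℕ) : ee n (m : ZMod n) = ww n ^ m := by
  rw [ee, ZMod.val_natCast, ww_pow_mod]

lemma ee_zero (n : ℕ) [NeZero n] : ee n 0 = 1 := by
  rw [ee, ZMod.val_zero, pow_zero]

lemma ee_mul_ee_neg (n : ℕ) [NeZero n] (a : ZMod n) : ee n a * ee n (-a) = 1 := by
  rw [← ee_add, add_neg_cancel, ee_zero]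

/-- The circulant eigenvalue `2cos(2πml/n)`, as `ω^{ml} + ω^{-ml}`. -/
noncomputable def cc (n : ℕ) [NeZero n] (m : ℕ) (l : ZMod n) : ℂ :=
  ee n (m * l) + ee n (-(m * l))

lemma ww_pow_eq_exp (n : ℕ) [NeZero n] (t : ℕ) :
    ww n ^ t = Complex.exp ((2 * Real.pi * t / n : ℝ) * Complex.I) := by
  have hn : (n : ℂ) ≠ 0 := Nat.cast_ne_zero.mpr (NeZero.ne n)
  rw [ww, ← Complex.exp_nat_mul]
  congr 1
  push_cast
  field_simp

lemma cc_eq (n : ℕ) [NeZero n] (m : ℕ) (l : ZMod n) :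
    cc n m l = ((2 * Real.cos (2 * Real.pi * m * l.val / n) : ℝ) : ℂ) := by
  have h1 : (m : ZMod n) * l = ((m * l.val : ℕ) : ZMod n) := by
    push_cast [ZMod.natCast_val, ZMod.cast_id]; rfl
  have h2 : ee n ((m : ZMod n) * l) =
      Complex.exp ((2 * Real.pi * (m * l.val) / n : ℝ) * Complex.I) := by
    rw [h1, ee_natCast, ww_pow_eq_exp]; push_cast; ring_nf
  have h3 : ee n (-((m : ZMod n) * l)) =
      Complex.exp (-((2 * Real.pi * (m * l.val) / n : ℝ) * Complex.I)) := by
    have := ee_mul_ee_neg n ((m : ZMod n) * l)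
    rw [h2] at this
    rw [Complex.exp_neg]
    field_simp at this ⊢
    linear_combination this
  rw [cc, h2, h3]
  push_cast [Complex.ofReal_cos]
  rw [Complex.two_cos, neg_mul]
  ring_nf

/-- The DFT matrix on `ZMod n`. -/
noncomputable def Uc (n : ℕ) [NeZero n] : Matrix (ZMod n) (ZMod n) ℂ :=
  Matrix.of fun i l => ee n (i * l)

/-- The adjacency matrix of the cycle with step `m` on `ZMod n`. -/
def circ (n : ℕ) [NeZero n] (m : ℕ) : Matrix (ZMod n) (ZMod n) ℂ :=
  Matrix.of fun i i' =>
    if i ≠ i' ∧ (i' - i = (m : ZMod n) ∨ i - i' = (m : ZMod n)) then 1 else 0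

def zmodFinEquiv (n : ℕ) [NeZero n] : Fin n ≃ ZMod n where
  toFun t := ((t : ℕ) : ZMod n)
  invFun z := ⟨z.val, z.val_lt⟩
  left_inv t := by ext; simp [ZMod.val_natCast, Nat.mod_eq_of_lt t.isLt]
  right_inv z := by simp [ZMod.natCast_val, ZMod.cast_id]

lemma natCast_ne_zero_zmod (n m : ℕ) [NeZero n] (h1 : 0 < m) (h2 : m < n) :
    (m : ZMod n) ≠ 0 := by
  rw [Ne, ZMod.natCast_eq_zero_iff]
  exact fun h => absurd (Nat.le_of_dvd h1 h) (not_le.mpr h2)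

/-- The DFT matrix diagonalizes the step-`m` cycle. -/
lemma circ_mul_Uc (n : ℕ) [NeZero n] (m : ℕ) (h1 : 1 ≤ m) (h2 : 2 * m < n) :
    circ n m * Uc n = Uc n * Matrix.diagonal (cc n m) := by
  have hm0 : (m : ZMod n) ≠ 0 := natCast_ne_zero_zmod n m h1 (by omega)
  have hmm : ((m : ZMod n)) + m ≠ 0 := by
    have : ((2 * m : ℕ) : ZMod n) ≠ 0 := natCast_ne_zero_zmod n _ (by omega) h2
    push_cast at this
    intro h; apply this; rw [two_mul]; exact h
  ext i l
  have hc : i + (m : ZMod n) ≠ i - m := by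
    intro h; apply hmm
    have : (m : ZMod n) - (-m) = 0 := by linear_combination h
    linear_combination this
  have hP : ∀ i' : ZMod n,
      (i ≠ i' ∧ (i' - i = (m : ZMod n) ∨ i - i' = (m : ZMod n))) ↔
        (i' = i + m ∨ i' = i - m) := by
    intro i'
    constructor
    · rintro ⟨-, h | h⟩
      · left; linear_combination h
      · right; linear_combination -h
    · rintro (h | h)
      · exact ⟨fun hh => hm0 (by linear_combination -hh - h), Or.inl (by linear_combination h)⟩
      · exact ⟨fun hh => hm0 (by linear_combination hh + h), Or.inr (by linear_combination -h)⟩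
  rw [Matrix.mul_apply, Matrix.mul_diagonal]
  have key : ∀ i' : ZMod n,
      circ n m i i' * Uc n i' l =
        (if i' = i + (m : ZMod n) then ee n (i' * l) else 0) +
        (if i' = i - (m : ZMod n) then ee n (i' * l) else 0) := by
    intro i'
    simp only [circ, Uc, Matrix.of_apply]
    simp only [hP i']
    by_cases h1' : i' = i + (m : ZMod n) <;> by_cases h2' : i' = i - (m : ZMod n) <;>
      simp [h1', h2', hc] <;> tauto
  rw [Finset.sum_congr rfl fun i' _ => key i', Finset.sum_add_distrib,
    Finset.sum_ite_eq' Finset.univ, Finset.sum_ite_eq' Finset.univ]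
  simp only [Finset.mem_univ, if_true]
  have e1 : (i + (m : ZMod n)) * l = i * l + (m : ZMod n) * l := by ring
  have e2 : (i - (m : ZMod n)) * l = i * l + (-((m : ZMod n) * l)) := by ring
  rw [e1, e2, ee_add, ee_add, cc, Uc]
  simp only [Matrix.of_apply]
  ring

lemma det_Uc_ne_zero (n : ℕ) [NeZero n] : (Uc n).det ≠ 0 := by
  have hsub : (Uc n).submatrix (zmodFinEquiv n) (zmodFinEquiv n) =
      Matrix.vandermonde (fun t : Fin n => ww n ^ (t : ℕ)) := by
    ext t s
    simp only [Matrix.submatrix_apply, Uc, Matrix.of_apply, Matrix.vandermonde_apply,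
      zmodFinEquiv, Equiv.coe_fn_mk]
    rw [← Nat.cast_mul, ee_natCast, pow_mul]
  rw [← Matrix.det_submatrix_equiv_self (zmodFinEquiv n), hsub, Matrix.det_vandermonde]
  have hprim : IsPrimitiveRoot (ww n) n := Complex.isPrimitiveRoot_exp n (NeZero.ne n)
  refine Finset.prod_ne_zero_iff.mpr fun t _ => Finset.prod_ne_zero_iff.mpr fun s hs => ?_
  rw [Finset.mem_Ioi] at hs
  rw [sub_ne_zero]
  intro h
  exact absurd (hprim.pow_inj s.isLt t.isLt h) (by omega)

lemma det_fromBlocks_diag {R : Type*} [CommRing R] {ι : Type*} [Fintype ι] [DecidableEq ι]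
    (d1 d2 : ι → R) :
    (Matrix.fromBlocks (Matrix.diagonal d1) (-1) (-1) (Matrix.diagonal d2)).det =
      ∏ l : ι, (d1 l * d2 l - 1) := by
  have key : (Matrix.fromBlocks (Matrix.diagonal d1) (-1) (-1)
        (Matrix.diagonal d2)).submatrix (Equiv.boolProdEquivSum ι) (Equiv.boolProdEquivSum ι) =
      Matrix.blockDiagonal (fun l => Matrix.of fun r s : Bool =>
        if r then (if s then d2 l else -1) else (if s then -1 else d1 l)) := by
    ext ⟨r, l⟩ ⟨s, l'⟩
    cases r <;> cases s <;>
      simp [Matrix.blockDiagonal_apply, Matrix.diagonal_apply, Matrix.one_apply,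
        apply_ite Neg.neg, eq_comm] <;>
      by_cases h : l = l' <;> simp [h]
  rw [← Matrix.det_submatrix_equiv_self (Equiv.boolProdEquivSum ι), key,
    Matrix.det_blockDiagonal]
  refine Finset.prod_congr rfl fun l _ => ?_
  rw [← Matrix.det_submatrix_equiv_self finTwoEquiv, Matrix.det_fin_two]
  simp [finTwoEquiv]

lemma charmatrix_diagonal' {R : Type*} [CommRing R] {ι : Type*} [Fintype ι] [DecidableEq ι]
    (d : ι → R) :
    charmatrix (Matrix.diagonal d) = Matrix.diagonal (fun i => X - C (d i)) := by
  ext i j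
  by_cases h : i = j
  · subst h; simp [charmatrix_apply_eq]
  · simp [charmatrix_apply_ne _ _ _ h, Matrix.diagonal_apply_ne _ h]

end AuxIGraph

/-- The `2n` eigenvalues (with multiplicity) of the I-graph `I(n,j,k)` are exactly
the roots of the `n` quadratics `(λ - β_l)(λ - α_l) = 1`, `0 ≤ l ≤ n-1`, where
`α_l = 2cos(2πjl/n)` and `β_l = 2cos(2πkl/n)`: i.e. the characteristic polynomial
of the adjacency matrix factors accordingly. -/
theorem IGraph_charpoly (n j k : ℕ) [NeZero n] (hn : 3 ≤ n) (hj : 1 ≤ j) (hjk : j ≤ k)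
    (hk : 2 * k < n) :
    ((IGraph n j k).adjMatrix ℝ).charpoly =
      ∏ l ∈ Finset.range n,
        ((X - C (2 * Real.cos (2 * Real.pi * k * l / n))) *
         (X - C (2 * Real.cos (2 * Real.pi * j * l / n))) - 1) := by
  have hk1 : 1 ≤ k := le_trans hj hjk
  have hj2 : 2 * j < n := by omega
  set Mc : Matrix (ZMod n ⊕ ZMod n) (ZMod n ⊕ ZMod n) ℂ := (IGraph n j k).adjMatrix ℂ with hMc
  have hblocks : Mc = Matrix.fromBlocks (circ n k) 1 1 (circ n j) := by
    ext (a | a) (b | b) <;>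
      simp only [hMc, SimpleGraph.adjMatrix_apply] <;>
      simp [IGraph, circ, Matrix.one_apply] <;> congr
  set V : Matrix (ZMod n ⊕ ZMod n) (ZMod n ⊕ ZMod n) ℂ :=
    Matrix.fromBlocks (Uc n) 0 0 (Uc n) with hV
  set N₀ : Matrix (ZMod n ⊕ ZMod n) (ZMod n ⊕ ZMod n) ℂ :=
    Matrix.fromBlocks (Matrix.diagonal (cc n k)) 1 1 (Matrix.diagonal (cc n j)) with hN
  have hMV : Mc * V = V * N₀ := by
    rw [hblocks, hV, hN, Matrix.fromBlocks_multiply, Matrix.fromBlocks_multiply,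
      circ_mul_Uc n k hk1 hk, circ_mul_Uc n j hj hj2]
    simp
  have hch : charmatrix Mc * V.map C = V.map C * charmatrix N₀ := by
    rw [charmatrix, charmatrix]
    simp only [RingHom.mapMatrix_apply]
    rw [sub_mul, mul_sub, ← Matrix.map_mul, ← Matrix.map_mul, hMV]
    congr 1
    exact (Matrix.scalar_commute (X : ℂ[X]) (fun r => Commute.all _ _) (V.map C)).eq
  have hdetV : (V.map C).det ≠ 0 := by
    have h1 : (V.map (C : ℂ →+* ℂ[X])).det = C V.det := by
      rw [← RingHom.mapMatrix_apply, ← RingHom.map_det]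
    rw [h1, Ne, Polynomial.C_eq_zero, hV, Matrix.det_fromBlocks_zero₂₁]
    exact mul_ne_zero (det_Uc_ne_zero n) (det_Uc_ne_zero n)
  have hdet : Mc.charpoly = (charmatrix N₀).det := by
    have := congrArg Matrix.det hch
    rw [Matrix.det_mul, Matrix.det_mul] at this
    rw [Matrix.charpoly]
    rw [mul_comm] at this
    exact mul_left_cancel₀ hdetV this
  have hchN : charmatrix N₀ =
      Matrix.fromBlocks (Matrix.diagonal fun l => X - C (cc n k l)) (-1) (-1)
        (Matrix.diagonal fun l => X - C (cc n j l)) := by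
    rw [hN, charmatrix_fromBlocks, charmatrix_diagonal', charmatrix_diagonal',
      Matrix.map_one C (map_zero C) (map_one C)]
  have hprod : Mc.charpoly =
      ∏ l : ZMod n, ((X - C (cc n k l)) * (X - C (cc n j l)) - 1) := by
    rw [hdet, hchN, det_fromBlocks_diag]
  have hre : Mc.charpoly =
      ∏ l ∈ Finset.range n,
        ((X - C ((2 * Real.cos (2 * Real.pi * k * l / n) : ℝ) : ℂ)) *
         (X - C ((2 * Real.cos (2 * Real.pi * j * l / n) : ℝ) : ℂ)) - 1) := by
    rw [hprod, ← Equiv.prod_comp (zmodFinEquiv n), ← Fin.prod_univ_eq_prod_range]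
    refine Finset.prod_congr rfl fun t _ => ?_
    have hval : ((zmodFinEquiv n t : ZMod n)).val = (t : ℕ) := by
      simp [zmodFinEquiv, ZMod.val_natCast, Nat.mod_eq_of_lt t.isLt]
    rw [cc_eq, cc_eq, hval]
  apply Polynomial.map_injective (algebraMap ℝ ℂ) (algebraMap ℝ ℂ).injective
  have hmap : ((IGraph n j k).adjMatrix ℝ).map (algebraMap ℝ ℂ) = Mc := by
    ext v w
    simp [hMc, SimpleGraph.adjMatrix_apply, Matrix.map_apply, apply_ite ((↑) : ℝ → ℂ)]
  rw [← Matrix.charpoly_map, hmap, hre]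
  rw [Polynomial.map_prod]
  refine Finset.prod_congr rfl fun t _ => ?_
  simp [Polynomial.map_sub, Polynomial.map_mul, Polynomial.map_one, Complex.coe_algebraMap]
end

section
/- The I-graph I(n,j,k) is connected if and only if gcd(n, j, k) = 1. -/
open Matrix

/-- Translation automorphism of the I-graph. -/
def IGraph.shift (n j k : ℕ) (c : ZMod n) : IGraph n j k ≃g IGraph n j k where
  toEquiv := Equiv.sumCongr (Equiv.addRight c) (Equiv.addRight c)
  map_rel_iff' := by
    rintro (i | i) (i' | i') <;>
      simp [IGraph, Equiv.sumCongr, Equiv.addRight, add_sub_add_right_eq_sub]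

lemma IGraph.reach_add {n j k : ℕ} {x y : ZMod n} (c : ZMod n)
    (h : (IGraph n j k).Reachable (.inr x) (.inr y)) :
    (IGraph n j k).Reachable (.inr (x + c)) (.inr (y + c)) := by
  simpa [IGraph.shift] using h.map (IGraph.shift n j k c).toHom


/-- The I-graph `I(n,j,k)` is connected if and only if `gcd(n,j,k) = 1`. -/
theorem IGraph_connected_iff (n j k : ℕ) [NeZero n] (hn : 3 ≤ n) (hj : 1 ≤ j)
    (hjk : j ≤ k) (hk : 2 * k < n) :
    (IGraph n j k).Connected ↔ Nat.gcd (Nat.gcd n j) k = 1 := by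
  have hk1 : 1 ≤ k := hj.trans hjk
  have hjz : (j : ZMod n) ≠ 0 := by
    rw [Ne, ZMod.natCast_eq_zero_iff]
    intro h; have := Nat.le_of_dvd (by omega) h; omega
  have hkz : (k : ZMod n) ≠ 0 := by
    rw [Ne, ZMod.natCast_eq_zero_iff]
    intro h; have := Nat.le_of_dvd (by omega) h; omega
  constructor
  · -- connected → gcd = 1
    intro hconn
    by_contra hd
    set d := Nat.gcd (Nat.gcd n j) k with hdef
    have hdn : d ∣ n := dvd_trans (Nat.gcd_dvd_left _ _) (Nat.gcd_dvd_left n j)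
    have hdj : d ∣ j := dvd_trans (Nat.gcd_dvd_left _ _) (Nat.gcd_dvd_right n j)
    have hdk : d ∣ k := Nat.gcd_dvd_right _ _
    have hd0 : d ≠ 0 := by
      intro h
      exact NeZero.ne n (Nat.eq_zero_of_gcd_eq_zero_left (Nat.eq_zero_of_gcd_eq_zero_left h))
    have hd2 : 2 ≤ d := by omega
    haveI : NeZero d := ⟨hd0⟩
    haveI : Fact (1 < d) := ⟨hd2⟩
    set g : ZMod n →+* ZMod d := ZMod.castHom hdn (ZMod d) with hg
    have key : ∀ x y, (IGraph n j k).Adj x y → Sum.elim g g x = Sum.elim g g y := by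
      have hk0 : g (k : ZMod n) = 0 := by
        rw [map_natCast]
        exact (ZMod.natCast_eq_zero_iff k d).mpr hdk
      have hj0 : g (j : ZMod n) = 0 := by
        rw [map_natCast]
        exact (ZMod.natCast_eq_zero_iff j d).mpr hdj
      rintro (i | i) (i' | i') h
      · simp only [Sum.elim_inl]
        rcases h.2 with h2 | h2
        · have := congrArg g h2
          rw [map_sub, hk0, sub_eq_zero] at this
          exact this.symm
        · have := congrArg g h2
          rw [map_sub, hk0, sub_eq_zero] at this
          exact this
      · have h' : i = i' := h
        simp only [Sum.elim_inl, Sum.elim_inr]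
        exact congrArg g h'
      · have h' : i = i' := h
        simp only [Sum.elim_inl, Sum.elim_inr]
        exact congrArg g h'
      · simp only [Sum.elim_inr]
        rcases h.2 with h2 | h2
        · have := congrArg g h2
          rw [map_sub, hj0, sub_eq_zero] at this
          exact this.symm
        · have := congrArg g h2
          rw [map_sub, hj0, sub_eq_zero] at this
          exact this
    have hwalk : ∀ {x y : ZMod n ⊕ ZMod n}, (IGraph n j k).Reachable x y →
        Sum.elim g g x = Sum.elim g g y := by
      intro x y h
      obtain ⟨p⟩ := h
      induction p with
      | nil => rfl
      | cons h p ih => exact (key _ _ h).trans ih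
    have := hwalk (hconn.preconnected (Sum.inl 0) (Sum.inl 1))
    simp only [Sum.elim_inl, map_zero, _root_.map_one] at this
    exact zero_ne_one this
  · -- gcd = 1 → connected
    intro hgcd
    have adj_ab : ∀ i : ZMod n, (IGraph n j k).Adj (.inr i) (.inl i) := fun i => rfl
    have adj_aj : ∀ i : ZMod n, (IGraph n j k).Adj (.inr i) (.inr (i + j)) := by
      intro i
      exact ⟨fun h => hjz (left_eq_add.mp h), Or.inl (by ring)⟩
    have adj_bk : ∀ i : ZMod n, (IGraph n j k).Adj (.inl i) (.inl (i + k)) := by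
      intro i
      exact ⟨fun h => hkz (left_eq_add.mp h), Or.inl (by ring)⟩
    have reach_ak : ∀ i : ZMod n, (IGraph n j k).Reachable (.inr i) (.inr (i + k)) := by
      intro i
      exact ((adj_ab i).reachable.trans (adj_bk i).reachable).trans
        ((adj_ab (i + k)).reachable.symm)
    let S : AddSubgroup (ZMod n) :=
      { carrier := {x | (IGraph n j k).Reachable (.inr 0) (.inr x)}
        zero_mem' := SimpleGraph.Reachable.refl _
        add_mem' := by
          intro a b ha hb
          have h := IGraph.reach_add (j := j) (k := k) a hb
          simp only [zero_add] at h
          exact SimpleGraph.Reachable.trans ha (by rwa [add_comm b a] at h)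
        neg_mem' := by
          intro a ha
          have h := IGraph.reach_add (j := j) (k := k) (-a) ha
          simp only [zero_add, add_neg_cancel] at h
          exact h.symm }
    have hjS : (j : ZMod n) ∈ S := by
      have := (adj_aj 0).reachable
      show (IGraph n j k).Reachable (.inr 0) (.inr (j : ZMod n))
      simpa using this
    have hkS : (k : ZMod n) ∈ S := by
      have := reach_ak 0
      show (IGraph n j k).Reachable (.inr 0) (.inr (k : ZMod n))
      simpa using this
    have h1 : (1 : ZMod n) ∈ S := by
      obtain ⟨b, c, hbc⟩ : ∃ b c : ℤ, (1 : ZMod n) = b * (j : ZMod n) + c * (k : ZMod n) := by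
        refine ⟨Nat.gcdB n j * Nat.gcdA (Nat.gcd n j) k, Nat.gcdB (Nat.gcd n j) k, ?_⟩
        have e1 : ((Nat.gcd (Nat.gcd n j) k : ℕ) : ℤ) =
            (Nat.gcd n j) * Nat.gcdA (Nat.gcd n j) k + k * Nat.gcdB (Nat.gcd n j) k :=
          Nat.gcd_eq_gcd_ab _ _
        have e2 : ((Nat.gcd n j : ℕ) : ℤ) = n * Nat.gcdA n j + j * Nat.gcdB n j :=
          Nat.gcd_eq_gcd_ab _ _
        rw [hgcd, e2] at e1
        have h3 := congrArg (Int.cast : ℤ → ZMod n) e1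
        push_cast at h3
        rw [ZMod.natCast_self] at h3
        rw [h3]; push_cast; ring
      rw [hbc]
      refine S.add_mem ?_ ?_
      · simpa [zsmul_eq_mul] using S.zsmul_mem hjS b
      · simpa [zsmul_eq_mul] using S.zsmul_mem hkS c
    have hall : ∀ x : ZMod n, (IGraph n j k).Reachable (.inr 0) (.inr x) := by
      intro x
      have hx : x ∈ S := by
        have hxx : x = x.val • (1 : ZMod n) := by
          rw [nsmul_eq_mul, mul_one]
          simp [ZMod.natCast_val, ZMod.cast_id]
        rw [hxx]
        exact S.nsmul_mem h1 _
      exact hx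
    constructor
    intro x y
    have hx : ∀ z : ZMod n ⊕ ZMod n, (IGraph n j k).Reachable (.inr 0) z := by
      rintro (i | i)
      · exact (hall i).trans (adj_ab i).reachable
      · exact hall i
    exact (hx x).symm.trans (hx y)
end

section
/- If n is even and j, k are odd, then for every integer l with 0 ≤ l ≤ n/2, one has cos(2πj(n/2 - l)/n) = -cos(2πjl/n) and cos(2πk(n/2 - l)/n) = -cos(2πkl/n); consequently λ_l^+ + λ_{n/2 - l}^- = 0, where λ_l^± = cos(2πjl/n) + cos(2πkl/n) ± sqrt((cos(2πjl/n) - cos(2πkl/n))² + 1). -/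
lemma cos_half_shift (n m l : ℕ) (hn : 0 < n) (hmo : Odd m) :
    Real.cos (2 * Real.pi * m * ((n : ℝ) / 2 - l) / n) =
      -Real.cos (2 * Real.pi * m * l / n) := by
  have hn' : (n : ℝ) ≠ 0 := Nat.cast_ne_zero.mpr hn.ne'
  have h : 2 * Real.pi * m * ((n : ℝ) / 2 - l) / n =
      m * Real.pi - 2 * Real.pi * m * l / n := by
    field_simp
  rw [h, Real.cos_nat_mul_pi_sub, hmo.neg_one_pow, neg_one_mul]

/-- If `n` is even and `j, k` are odd, then for every integer `0 ≤ l ≤ n/2` one has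
`cos(2πj(n/2 - l)/n) = -cos(2πjl/n)` and `cos(2πk(n/2 - l)/n) = -cos(2πkl/n)`;
consequently `λ_l^+ + λ_{n/2-l}^- = 0`. -/
theorem lambda_sum_zero (n j k l : ℕ) (hn : 0 < n) (hne : Even n) (hjo : Odd j)
    (hko : Odd k) (hl : l ≤ n / 2) :
    Real.cos (2 * Real.pi * j * ((n : ℝ) / 2 - l) / n) =
      -Real.cos (2 * Real.pi * j * l / n) ∧
    Real.cos (2 * Real.pi * k * ((n : ℝ) / 2 - l) / n) =
      -Real.cos (2 * Real.pi * k * l / n) ∧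
    (Real.cos (2 * Real.pi * j * l / n) + Real.cos (2 * Real.pi * k * l / n) +
        Real.sqrt ((Real.cos (2 * Real.pi * j * l / n) -
          Real.cos (2 * Real.pi * k * l / n)) ^ 2 + 1)) +
      (Real.cos (2 * Real.pi * j * ((n : ℝ) / 2 - l) / n) +
        Real.cos (2 * Real.pi * k * ((n : ℝ) / 2 - l) / n) -
        Real.sqrt ((Real.cos (2 * Real.pi * j * ((n : ℝ) / 2 - l) / n) -
          Real.cos (2 * Real.pi * k * ((n : ℝ) / 2 - l) / n)) ^ 2 + 1)) = 0 := by
  have hj := cos_half_shift n j l hn hjo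
  have hk := cos_half_shift n k l hn hko
  refine ⟨hj, hk, ?_⟩
  rw [hj, hk,
    show (-Real.cos (2 * Real.pi * j * l / n) - -Real.cos (2 * Real.pi * k * l / n)) ^ 2
      = (Real.cos (2 * Real.pi * j * l / n) - Real.cos (2 * Real.pi * k * l / n)) ^ 2 by ring]
  ring
end

section
/- The connected I-graph I(n,j,k) is bipartite if and only if n is even and both j and k are odd. -/
open Matrix

section Aux

lemma zmod2_odd_of_eq_one {m : ℕ} (h : (m : ZMod 2) = 1) : Odd m := by
  rcases Nat.even_or_odd m with he | ho
  · obtain ⟨t, rfl⟩ := he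
    push_cast at h
    have : (2 : ZMod 2) = 0 := by decide
    rw [show ((t : ZMod 2) + t) = 2 * t by ring, this, zero_mul] at h
    exact absurd h (by decide)
  · exact ho

lemma zmod2_of_odd {m : ℕ} (h : Odd m) : (m : ZMod 2) = 1 := by
  obtain ⟨t, rfl⟩ := h
  push_cast
  rw [show (2 : ZMod 2) = 0 by decide]
  ring

lemma zmod2_mul_eq_one {x y : ZMod 2} (h : x * y = 1) : x = 1 ∧ y = 1 := by
  revert h; revert x y; decide

lemma shift_int {n : ℕ} (f : ZMod n → ZMod 2) (v : ZMod n)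
    (hv : ∀ x, f (x + v) = f x + 1) :
    ∀ (m : ℤ) (x : ZMod n), f (x + m • v) = f x + (m : ZMod 2) := by
  have hv' : ∀ x, f (x - v) = f x + 1 := by
    intro x
    have h1 := hv (x - v)
    rw [sub_add_cancel] at h1
    have : f (x - v) = f x - 1 := by rw [h1]; ring
    rw [this, sub_eq_add_neg, show (-1 : ZMod 2) = 1 by decide]
  intro m
  induction m using Int.induction_on with
  | zero => intro x; simp
  | succ i ih =>
      intro x
      have : x + ((i : ℤ) + 1) • v = (x + (i : ℤ) • v) + v := by
        rw [add_smul, one_smul]; ring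
      rw [this, hv, ih]
      push_cast; ring
  | pred i ih =>
      intro x
      have : x + (-(i : ℤ) - 1) • v = (x + (-(i : ℤ)) • v) - v := by
        rw [sub_smul, one_smul]; ring
      rw [this, hv', ih]
      push_cast
      have h2 : (2 : ZMod 2) = 0 := by decide
      linear_combination h2

end Aux

/-- The connected I-graph `I(n,j,k)` (i.e. with `gcd(n,j,k) = 1`) is bipartite
if and only if `n` is even and both `j` and `k` are odd. -/
theorem IGraph_bipartite_iff (n j k : ℕ) [NeZero n] (hn : 3 ≤ n) (hj : 1 ≤ j)
    (hjk : j ≤ k) (hk : 2 * k < n) (hgcd : Nat.gcd (Nat.gcd n j) k = 1) :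
    (IGraph n j k).Colorable 2 ↔ Even n ∧ Odd j ∧ Odd k := by
  have hjn : j < n := by omega
  have hkn : k < n := by omega
  have hjne : (j : ZMod n) ≠ 0 := by
    intro h
    rw [ZMod.natCast_eq_zero_iff] at h
    have := Nat.le_of_dvd (by omega) h
    omega
  have hkne : (k : ZMod n) ≠ 0 := by
    intro h
    rw [ZMod.natCast_eq_zero_iff] at h
    have := Nat.le_of_dvd (by omega) h
    omega
  constructor
  · rintro ⟨c⟩
    set e : Fin 2 → ZMod 2 := fun t => (t.val : ZMod 2) with he
    have edif : ∀ x y : Fin 2, x ≠ y → e x = e y + 1 := by decide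
    set f : ZMod n → ZMod 2 := fun i => e (c (.inr i)) with hfdef
    set g : ZMod n → ZMod 2 := fun i => e (c (.inl i)) with hgdef
    have hf : ∀ x, f (x + j) = f x + 1 := by
      intro x
      have hadj : (IGraph n j k).Adj (.inr x) (.inr (x + (j : ZMod n))) :=
        ⟨fun h => hjne (by linear_combination -h), Or.inl (by ring)⟩
      exact edif _ _ (Ne.symm (c.valid hadj))
    have hab : ∀ i, g i = f i + 1 := by
      intro i
      have hadj : (IGraph n j k).Adj (.inr i) (.inl i) := rfl
      exact edif _ _ (Ne.symm (c.valid hadj))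
    have hg : ∀ x, g (x + k) = g x + 1 := by
      intro x
      have hadj : (IGraph n j k).Adj (.inl x) (.inl (x + (k : ZMod n))) :=
        ⟨fun h => hkne (by linear_combination -h), Or.inl (by ring)⟩
      exact edif _ _ (Ne.symm (c.valid hadj))
    have hfk : ∀ x, f (x + k) = f x + 1 := by
      intro x
      have h1 := hg x
      rw [hab, hab] at h1
      exact add_right_cancel h1
    -- Bezout
    set a : ℤ := Nat.gcdB n j * Nat.gcdA (Nat.gcd n j) k with ha
    set b : ℤ := Nat.gcdB (Nat.gcd n j) k with hb
    have h1 := Nat.gcd_eq_gcd_ab n j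
    have h2 := Nat.gcd_eq_gcd_ab (Nat.gcd n j) k
    rw [hgcd] at h2
    have hint : (a * j + b * k : ℤ) =
        1 - (n : ℤ) * (Nat.gcdA n j * Nat.gcdA (Nat.gcd n j) k) := by
      rw [ha, hb]
      push_cast at h2 ⊢
      linear_combination (-(Nat.gcdA (Nat.gcd n j) k)) * h1 - h2
    have heq : a • (j : ZMod n) + b • (k : ZMod n) = 1 := by
      rw [zsmul_eq_mul, zsmul_eq_mul]
      have : ((a * (j:ℤ) + b * (k:ℤ) : ℤ) : ZMod n) = 1 := by
        rw [hint]
        push_cast [ZMod.natCast_self]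
        ring
      push_cast at this
      linear_combination this
    set s : ZMod 2 := (a : ZMod 2) + (b : ZMod 2) with hs
    have key : ∀ x, f (x + 1) = f x + s := by
      intro x
      have e1 := shift_int f _ hf a x
      have e2 := shift_int f _ hfk b (x + a • (j : ZMod n))
      rw [add_assoc, heq] at e2
      rw [e2, e1, hs, add_assoc]
    have hnat : ∀ (m : ℕ) (x : ZMod n), f (x + m) = f x + m * s := by
      intro m
      induction m with
      | zero => intro x; simp
      | succ i ih =>
          intro x
          have : x + ((i : ℕ) + 1 : ℕ) = (x + (i : ℕ)) + 1 := by push_cast; ring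
          rw [this, key, ih]
          push_cast; ring
    have hJ : (j : ZMod 2) * s = 1 := by
      have h1 := hnat j 0
      rw [hf 0] at h1
      exact (add_left_cancel h1).symm
    have hK : (k : ZMod 2) * s = 1 := by
      have h1 := hnat k 0
      rw [hfk 0] at h1
      exact (add_left_cancel h1).symm
    have hN : (n : ZMod 2) * s = 0 := by
      have h1 := hnat n 0
      rw [ZMod.natCast_self, add_zero] at h1
      have := (left_eq_add).mp h1
      exact this
    obtain ⟨hj1, hs1⟩ := zmod2_mul_eq_one hJ
    obtain ⟨hk1, -⟩ := zmod2_mul_eq_one hK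
    rw [hs1, mul_one] at hN
    refine ⟨?_, zmod2_odd_of_eq_one hj1, zmod2_odd_of_eq_one hk1⟩
    rw [ZMod.natCast_eq_zero_iff] at hN
    exact (even_iff_two_dvd).mpr hN
  · rintro ⟨hne, hoj, hok⟩
    have h2n : (2 : ℕ) ∣ n := hne.two_dvd
    set φ : ZMod n →+* ZMod 2 := ZMod.castHom h2n (ZMod 2) with hφ
    have hφk : φ ((k : ℕ) : ZMod n) = 1 := by
      rw [map_natCast]; exact zmod2_of_odd hok
    have hφj : φ ((j : ℕ) : ZMod n) = 1 := by
      rw [map_natCast]; exact zmod2_of_odd hoj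
    have C : (IGraph n j k).Coloring (ZMod 2) := by
      refine SimpleGraph.Coloring.mk
        (fun v => match v with | .inl i => φ i + 1 | .inr i => φ i) ?_
      rintro (i | i) (i' | i') h hc
      · have hc' : φ i = φ i' := add_right_cancel hc
        rcases h.2 with h2 | h2
        · have := congrArg φ h2
          rw [map_sub, hφk, hc', sub_self] at this
          exact zero_ne_one this
        · have := congrArg φ h2
          rw [map_sub, hφk, hc', sub_self] at this
          exact zero_ne_one this
      · have h' : i = i' := h
        subst h'
        have : (1 : ZMod 2) = 0 := by linear_combination hc
        exact one_ne_zero this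
      · have h' : i = i' := h
        subst h'
        have : (1 : ZMod 2) = 0 := by linear_combination -hc
        exact one_ne_zero this
      · have hc' : φ i = φ i' := hc
        rcases h.2 with h2 | h2
        · have := congrArg φ h2
          rw [map_sub, hφj, hc', sub_self] at this
          exact zero_ne_one this
        · have := congrArg φ h2
          rw [map_sub, hφj, hc', sub_self] at this
          exact zero_ne_one this
    have := C.colorable
    simpa using this
end

section
/- Zero is an eigenvalue of the I-graph I(n,j,2j) if and only if there exist integers l with 0 ≤ l ≤ n-1 and r ≥ 0 such that one of the following holds: 3jl = n(1+3r), or 3jl = n(2+3r), or 10jl = n(1+10r), or 10jl = n(3+10r), or 10jl = n(7+10r), or 10jl = n(9+10r). -/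
open Matrix

open Matrix

lemma root_ne_zero {n : ℕ} [NeZero n] {η : ℂ} (hη : η ^ n = 1) : η ≠ 0 := by
  intro h; rw [h, zero_pow (NeZero.ne n)] at hη; exact zero_ne_one hη

lemma pow_val_natCast {n : ℕ} [NeZero n] {η : ℂ} (hη : η ^ n = 1) (m : ℕ) :
    η ^ ((m : ZMod n)).val = η ^ m := by
  rw [ZMod.val_natCast]
  conv_rhs => rw [← Nat.mod_add_div m n, pow_add, pow_mul, hη, one_pow, mul_one]

lemma pow_val_add {n : ℕ} [NeZero n] {η : ℂ} (hη : η ^ n = 1) (a b : ZMod n) :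
    η ^ (a + b).val = η ^ a.val * η ^ b.val := by
  have : ((a.val + b.val : ℕ) : ZMod n) = a + b := by
    push_cast [ZMod.natCast_val, ZMod.cast_id]
    rfl
  rw [← this, pow_val_natCast hη, pow_add]

lemma pow_val_neg {n : ℕ} [NeZero n] {η : ℂ} (hη : η ^ n = 1) (a : ZMod n) :
    η ^ (-a).val = (η ^ a.val)⁻¹ := by
  have h := pow_val_add hη (-a) a
  rw [neg_add_cancel, ZMod.val_zero, pow_zero] at h
  exact eq_inv_of_mul_eq_one_left h.symm

noncomputable def zet (n : ℕ) : ℂ := Complex.exp (2 * ↑Real.pi * Complex.I / ↑n)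

lemma zet_prim (n : ℕ) [NeZero n] : IsPrimitiveRoot (zet n) n :=
  Complex.isPrimitiveRoot_exp n (NeZero.ne n)

lemma zet_pow_n (n : ℕ) [NeZero n] : (zet n) ^ n = 1 := (zet_prim n).pow_eq_one

/-- the scalar eigenvalue-zero condition at frequency l -/
def Qcond (n j l : ℕ) : Prop :=
  (zet n ^ (j * l)) ^ 6 + (zet n ^ (j * l)) ^ 4 + (zet n ^ (j * l)) ^ 2 + 1 = (zet n ^ (j * l)) ^ 3

lemma fac_iff {ξ : ℂ} (hξ : ξ ≠ 0) :
    (ξ ^ 3)⁻¹ + ξ ^ 3 + ξ⁻¹ + ξ - 1 = 0 ↔ ξ ^ 6 + ξ ^ 4 + ξ ^ 2 + 1 = ξ ^ 3 := by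
  constructor <;> intro h
  · apply mul_left_cancel₀ hξ
    field_simp at h
    linear_combination ξ * h
  · field_simp
    linear_combination h

lemma keyC (n j : ℕ) [NeZero n] :
    (∃ w : ZMod n → ℂ, w ≠ 0 ∧ ∀ i : ZMod n,
        w (i + (3 * j : ℕ)) + w (i - (3 * j : ℕ)) + w (i + (j : ℕ)) + w (i - (j : ℕ)) = w i) ↔
    ∃ l, l < n ∧ Qcond n j l := by
  have hζn := zet_pow_n n
  have hζ0 : zet n ≠ 0 := root_ne_zero hζn
  constructor
  · rintro ⟨w, hw0, hw⟩
    by_contra hq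
    push_neg at hq
    set β : ZMod n → ℂ := fun i => zet n ^ i.val with hβ
    have hβmul : ∀ a b : ZMod n, β (a + b) = β a * β b := fun a b => pow_val_add hζn a b
    have hβnat : ∀ m : ℕ, β ((m : ZMod n)) = zet n ^ m := fun m => pow_val_natCast hζn m
    have hβne : ∀ a : ZMod n, β a ≠ 0 := fun a => pow_ne_zero _ hζ0
    have hβpow : ∀ (a : ZMod n), (β a) ^ n = 1 := by
      intro a
      show (zet n ^ a.val) ^ n = 1
      rw [← pow_mul, mul_comm, pow_mul, hζn, one_pow]
    set φ : ℕ → ℂ := fun l => ∑ i : ZMod n, w i * (β i) ^ l with hφ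
    -- shift lemma
    have hshift0 : ∀ (a : ZMod n) (l : ℕ),
        (∑ i : ZMod n, w (i + a) * (β i) ^ l) * (β a) ^ l = φ l := by
      intro a l
      rw [Finset.sum_mul]
      have hstep : ∀ i : ZMod n, w (i + a) * (β i) ^ l * (β a) ^ l
          = w (i + a) * (β (i + a)) ^ l := by
        intro i
        rw [hβmul, mul_pow, mul_assoc]
      rw [Finset.sum_congr rfl (fun i _ => hstep i)]
      exact Fintype.sum_equiv (Equiv.addRight a)
        (fun i => w (i + a) * β (i + a) ^ l) (fun i => w i * β i ^ l) (fun i => rfl)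
    have hshift : ∀ (a : ZMod n) (l : ℕ),
        ∑ i : ZMod n, w (i + a) * (β i) ^ l = φ l * ((β a) ^ l)⁻¹ := by
      intro a l
      rw [eq_mul_inv_iff_mul_eq₀ (pow_ne_zero _ (hβne a))]
      exact hshift0 a l
    -- each Fourier coefficient vanishes
    have hφ0 : ∀ l < n, φ l = 0 := by
      intro l hl
      have hQ := hq l hl
      unfold Qcond at hQ
      set ξ : ℂ := zet n ^ (j * l) with hξ
      have hξ0 : ξ ≠ 0 := pow_ne_zero _ hζ0
      have h3 : (β ((3 * j : ℕ) : ZMod n)) ^ l = ξ ^ 3 := by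
        rw [hβnat, ← pow_mul, hξ, ← pow_mul]; ring_nf
      have h1 : (β ((j : ℕ) : ZMod n)) ^ l = ξ := by
        rw [hβnat, ← pow_mul, hξ]
      have key : ∀ a : ZMod n, ∑ i : ZMod n, w (i - a) * (β i) ^ l = φ l * (β a) ^ l := by
        intro a
        have h' := hshift (-a) l
        simp only [sub_eq_add_neg]
        rw [h']
        have hbn : β (-a) = (β a)⁻¹ := pow_val_neg hζn a
        rw [hbn, inv_pow, inv_inv]
      have hsum : φ l * (ξ ^ 3)⁻¹ + φ l * ξ ^ 3 + φ l * ξ⁻¹ + φ l * ξ = φ l := by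
        have h' := Finset.sum_congr rfl (fun i (_ : i ∈ Finset.univ) =>
          congrArg (· * (β i) ^ l) (hw i))
        simp only [add_mul] at h'
        rw [Finset.sum_add_distrib, Finset.sum_add_distrib, Finset.sum_add_distrib] at h'
        rw [hshift ((3 * j : ℕ) : ZMod n) l, key ((3 * j : ℕ) : ZMod n),
          hshift ((j : ℕ) : ZMod n) l, key ((j : ℕ) : ZMod n), h3, h1] at h'
        exact h'
      have hfac : (ξ ^ 3)⁻¹ + ξ ^ 3 + ξ⁻¹ + ξ - 1 ≠ 0 :=
        fun h => hQ ((fac_iff hξ0).mp h)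
      by_contra hφne
      apply hfac
      have hz : φ l * ((ξ ^ 3)⁻¹ + ξ ^ 3 + ξ⁻¹ + ξ - 1) = 0 := by
        rw [mul_sub, mul_one]
        rw [show φ l * ((ξ ^ 3)⁻¹ + ξ ^ 3 + ξ⁻¹ + ξ)
            = φ l * (ξ ^ 3)⁻¹ + φ l * ξ ^ 3 + φ l * ξ⁻¹ + φ l * ξ by ring, hsum, sub_self]
      exact (mul_eq_zero.mp hz).resolve_left hφne
    -- Fourier inversion: w = 0
    apply hw0
    funext i0
    show w i0 = 0
    have hswap : ∑ l ∈ Finset.range n, φ l * ((β i0) ^ l)⁻¹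
        = ∑ i : ZMod n, w i * ∑ l ∈ Finset.range n, (β i / β i0) ^ l := by
      have e1 : ∀ l, φ l * ((β i0) ^ l)⁻¹
          = ∑ i : ZMod n, w i * (β i / β i0) ^ l := by
        intro l
        show (∑ i : ZMod n, w i * (β i) ^ l) * ((β i0) ^ l)⁻¹ = _
        rw [Finset.sum_mul]
        refine Finset.sum_congr rfl fun i _ => ?_
        rw [div_pow, div_eq_mul_inv]
        ring
      rw [Finset.sum_congr rfl fun l _ => e1 l, Finset.sum_comm]
      refine Finset.sum_congr rfl fun i _ => ?_
      rw [Finset.mul_sum]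
    have hdelta : ∀ i : ZMod n, w i * ∑ l ∈ Finset.range n, (β i / β i0) ^ l
        = if i = i0 then (n : ℂ) * w i else 0 := by
      intro i
      by_cases h : i = i0
      · subst h
        rw [if_pos rfl, div_self (hβne i)]
        simp only [one_pow, Finset.sum_const, Finset.card_range, nsmul_eq_mul, mul_one]
        ring
      · have hne1 : β i / β i0 ≠ 1 := by
          intro hbe
          apply h
          have hb : β i = β i0 := (div_eq_one_iff_eq (hβne i0)).mp hbe
          exact ZMod.val_injective n ((zet_prim n).pow_inj (ZMod.val_lt i) (ZMod.val_lt i0) hb)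
        rw [geom_sum_eq hne1, div_pow, hβpow, hβpow, if_neg h]
        simp
    have hinv : (n : ℂ) * w i0 = 0 := by
      have : (n : ℂ) * w i0 = ∑ l ∈ Finset.range n, φ l * ((β i0) ^ l)⁻¹ := by
        rw [hswap]
        rw [Finset.sum_congr rfl fun i _ => hdelta i,
          Finset.sum_ite_eq' Finset.univ i0 (fun i => (n : ℂ) * w i)]
        simp
      rw [this]
      exact Finset.sum_eq_zero fun l hl => by
        rw [hφ0 l (Finset.mem_range.mp hl), zero_mul]
    have hn0 : (n : ℂ) ≠ 0 := Nat.cast_ne_zero.mpr (NeZero.ne n)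
    exact (mul_eq_zero.mp hinv).resolve_left hn0
  · rintro ⟨l, hl, hQ⟩
    unfold Qcond at hQ
    set η : ℂ := zet n ^ l with hη
    have hηn : η ^ n = 1 := by
      rw [hη, ← pow_mul, mul_comm, pow_mul, hζn, one_pow]
    have hη0 : η ≠ 0 := pow_ne_zero _ hζ0
    set ξ : ℂ := zet n ^ (j * l) with hξ
    have hξη : ξ = η ^ j := by rw [hξ, hη, ← pow_mul, mul_comm]
    have hξ0 : ξ ≠ 0 := pow_ne_zero _ hζ0
    refine ⟨fun i => η ^ i.val, ?_, ?_⟩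
    · intro h
      have : η ^ (0 : ZMod n).val = 0 := congrFun h 0
      rw [ZMod.val_zero, pow_zero] at this
      exact one_ne_zero this
    · intro i
      show η ^ (i + ((3 * j : ℕ) : ZMod n)).val + η ^ (i - ((3 * j : ℕ) : ZMod n)).val
        + η ^ (i + ((j : ℕ) : ZMod n)).val + η ^ (i - ((j : ℕ) : ZMod n)).val = η ^ i.val
      have hadd : ∀ (m : ℕ), η ^ (i + (m : ZMod n)).val = η ^ i.val * η ^ m := by
        intro m
        rw [pow_val_add hηn, pow_val_natCast hηn]
      have hsub : ∀ (m : ℕ), η ^ (i - (m : ZMod n)).val = η ^ i.val * (η ^ m)⁻¹ := by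
        intro m
        rw [sub_eq_add_neg, pow_val_add hηn, pow_val_neg hηn, pow_val_natCast hηn]
      rw [hadd, hsub, hadd, hsub]
      have h3 : η ^ (3 * j) = ξ ^ 3 := by rw [hξη, mul_comm]; exact pow_mul η j 3
      have hscal : ξ ^ 3 + (ξ ^ 3)⁻¹ + ξ + ξ⁻¹ = 1 := by
        have h6 : ξ ^ 3 ≠ 0 := pow_ne_zero _ hξ0
        field_simp
        linear_combination hQ
      rw [h3, ← hξη]
      calc η ^ i.val * ξ ^ 3 + η ^ i.val * (ξ ^ 3)⁻¹ + η ^ i.val * ξ + η ^ i.val * ξ⁻¹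
          = η ^ i.val * (ξ ^ 3 + (ξ ^ 3)⁻¹ + ξ + ξ⁻¹) := by ring
        _ = η ^ i.val := by rw [hscal, mul_one]

lemma Qcond_iff (n j l : ℕ) [NeZero n] :
    Qcond n j l ↔ ((n ∣ j * l * 3 ∧ ¬ n ∣ j * l) ∨
      (n ∣ j * l * 10 ∧ ¬ n ∣ j * l * 5 ∧ ¬ n ∣ j * l * 2)) := by
  have hprim := zet_prim n
  set ξ : ℂ := zet n ^ (j * l) with hξ
  have hpow : ∀ m : ℕ, ξ ^ m = 1 ↔ n ∣ j * l * m := by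
    intro m
    rw [hξ, ← pow_mul]
    exact hprim.pow_eq_one_iff_dvd (j * l * m)
  have h1 : ξ = 1 ↔ n ∣ j * l := by
    have := hpow 1
    rw [pow_one, mul_one] at this
    exact this
  have hQfac : Qcond n j l ↔
      (ξ ^ 2 + ξ + 1) * (ξ ^ 4 - ξ ^ 3 + ξ ^ 2 - ξ + 1) = 0 := by
    unfold Qcond
    rw [← hξ]
    constructor <;> intro h
    · linear_combination h
    · linear_combination h
  have hA : ξ ^ 2 + ξ + 1 = 0 ↔ (ξ ^ 3 = 1 ∧ ξ ≠ 1) := by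
    constructor
    · intro h
      refine ⟨by linear_combination (ξ - 1) * h, fun he => ?_⟩
      rw [he] at h
      norm_num at h
    · rintro ⟨h3, hne⟩
      have : (ξ - 1) * (ξ ^ 2 + ξ + 1) = 0 := by linear_combination h3
      exact (mul_eq_zero.mp this).resolve_left (sub_ne_zero.mpr hne)
  have hB : ξ ^ 4 - ξ ^ 3 + ξ ^ 2 - ξ + 1 = 0 ↔ (ξ ^ 10 = 1 ∧ ξ ^ 5 ≠ 1 ∧ ξ ^ 2 ≠ 1) := by
    constructor
    · intro h
      have h5 : ξ ^ 5 = -1 := by linear_combination (ξ + 1) * h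
      refine ⟨by rw [show (10:ℕ) = 5*2 from rfl, pow_mul, h5]; norm_num, ?_, ?_⟩
      · rw [h5]; norm_num
      · intro h2
        have hx : ξ = 1 ∨ ξ = -1 := by
          have : (ξ - 1) * (ξ + 1) = 0 := by linear_combination h2
          rcases mul_eq_zero.mp this with h' | h'
          · exact Or.inl (sub_eq_zero.mp h')
          · exact Or.inr (eq_neg_of_add_eq_zero_left h')
        rcases hx with h' | h' <;> rw [h'] at h <;> norm_num at h
    · rintro ⟨h10, h5, h2⟩
      have h5' : ξ ^ 5 = -1 := by
        have : (ξ ^ 5 - 1) * (ξ ^ 5 + 1) = 0 := by linear_combination h10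
        rcases mul_eq_zero.mp this with h' | h'
        · exact absurd (sub_eq_zero.mp h') h5
        · exact eq_neg_of_add_eq_zero_left h'
      have hne : ξ + 1 ≠ 0 := by
        intro hc
        have : ξ = -1 := eq_neg_of_add_eq_zero_left hc
        rw [this] at h2
        norm_num at h2
      have : (ξ + 1) * (ξ ^ 4 - ξ ^ 3 + ξ ^ 2 - ξ + 1) = 0 := by linear_combination h5'
      exact (mul_eq_zero.mp this).resolve_left hne
  rw [hQfac, mul_eq_zero, hA, hB]
  simp only [ne_eq, hpow 3, hpow 10, hpow 5, hpow 2, h1]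

lemma keyD_aux (n j l r a : ℕ) (hn : 0 < n) (ha : a % 2 = 1) (ha5 : ¬ 5 ∣ a)
    (h : 10 * j * l = n * (a + 10 * r)) :
    n ∣ j * l * 10 ∧ ¬ n ∣ j * l * 5 ∧ ¬ n ∣ j * l * 2 := by
  refine ⟨⟨a + 10 * r, by zify at h ⊢; linear_combination h⟩, ?_, ?_⟩
  · rintro ⟨t, ht⟩
    have hc : n * (2 * t) = n * (a + 10 * r) := by zify at h ht ⊢; linear_combination h - 2 * ht
    have := Nat.eq_of_mul_eq_mul_left hn hc
    omega
  · rintro ⟨t, ht⟩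
    have hc : n * (5 * t) = n * (a + 10 * r) := by zify at h ht ⊢; linear_combination h - 5 * ht
    have := Nat.eq_of_mul_eq_mul_left hn hc
    omega

lemma keyD (n j : ℕ) [NeZero n] :
    (∃ l, l < n ∧ ((n ∣ j * l * 3 ∧ ¬ n ∣ j * l) ∨
      (n ∣ j * l * 10 ∧ ¬ n ∣ j * l * 5 ∧ ¬ n ∣ j * l * 2))) ↔
    (∃ l r : ℕ, l ≤ n - 1 ∧
      (3 * j * l = n * (1 + 3 * r) ∨ 3 * j * l = n * (2 + 3 * r) ∨
       10 * j * l = n * (1 + 10 * r) ∨ 10 * j * l = n * (3 + 10 * r) ∨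
       10 * j * l = n * (7 + 10 * r) ∨ 10 * j * l = n * (9 + 10 * r))) := by
  have hn := Nat.pos_of_ne_zero (NeZero.ne n)
  constructor
  · rintro ⟨l, hl, ⟨⟨s, hs⟩, hnd⟩ | ⟨⟨s, hs⟩, hnd5, hnd2⟩⟩
    · have h3s : ¬ (3 ∣ s) := by
        rintro ⟨t, ht⟩
        refine hnd ⟨t, ?_⟩
        have h2 : (j * l) * 3 = (n * t) * 3 := by zify at hs ht ⊢; linear_combination hs + n * ht
        exact Nat.eq_of_mul_eq_mul_right (by norm_num) h2
      have hmod : s % 3 = 1 ∨ s % 3 = 2 := by omega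
      have key : ∀ a : ℕ, s % 3 = a → 3 * j * l = n * (a + 3 * (s / 3)) := by
        intro a ha
        obtain ⟨q, hq⟩ : ∃ q, s / 3 = q := ⟨_, rfl⟩
        rw [hq]
        have h' : a + 3 * q = s := by omega
        zify at hs h' ⊢
        linear_combination hs - n * h'
      rcases hmod with h | h
      · exact ⟨l, s / 3, by omega, Or.inl (key 1 h)⟩
      · exact ⟨l, s / 3, by omega, Or.inr (Or.inl (key 2 h))⟩
    · have h2s : ¬ (2 ∣ s) := by
        rintro ⟨t, ht⟩
        refine hnd5 ⟨t, ?_⟩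
        have h2 : (j * l * 5) * 2 = (n * t) * 2 := by zify at hs ht ⊢; linear_combination hs + n * ht
        exact Nat.eq_of_mul_eq_mul_right (by norm_num) h2
      have h5s : ¬ (5 ∣ s) := by
        rintro ⟨t, ht⟩
        refine hnd2 ⟨t, ?_⟩
        have h2 : (j * l * 2) * 5 = (n * t) * 5 := by zify at hs ht ⊢; linear_combination hs + n * ht
        exact Nat.eq_of_mul_eq_mul_right (by norm_num) h2
      have hmod : s % 10 = 1 ∨ s % 10 = 3 ∨ s % 10 = 7 ∨ s % 10 = 9 := by omega
      have key : ∀ a : ℕ, s % 10 = a → 10 * j * l = n * (a + 10 * (s / 10)) := by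
        intro a ha
        obtain ⟨q, hq⟩ : ∃ q, s / 10 = q := ⟨_, rfl⟩
        rw [hq]
        have h' : a + 10 * q = s := by omega
        zify at hs h' ⊢
        linear_combination hs - n * h'
      rcases hmod with h | h | h | h
      · exact ⟨l, s / 10, by omega, Or.inr (Or.inr (Or.inl (key 1 h)))⟩
      · exact ⟨l, s / 10, by omega, Or.inr (Or.inr (Or.inr (Or.inl (key 3 h))))⟩
      · exact ⟨l, s / 10, by omega, Or.inr (Or.inr (Or.inr (Or.inr (Or.inl (key 7 h)))))⟩
      · exact ⟨l, s / 10, by omega, Or.inr (Or.inr (Or.inr (Or.inr (Or.inr (key 9 h)))))⟩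
  · rintro ⟨l, r, hl, h | h | h | h | h | h⟩ <;> refine ⟨l, by omega, ?_⟩
    · refine Or.inl ⟨⟨1 + 3 * r, by zify at h ⊢; linear_combination h⟩, ?_⟩
      rintro ⟨t, ht⟩
      have hc : n * (3 * t) = n * (1 + 3 * r) := by zify at h ht ⊢; linear_combination h - 3 * ht
      have := Nat.eq_of_mul_eq_mul_left hn hc; omega
    · refine Or.inl ⟨⟨2 + 3 * r, by zify at h ⊢; linear_combination h⟩, ?_⟩
      rintro ⟨t, ht⟩
      have hc : n * (3 * t) = n * (2 + 3 * r) := by zify at h ht ⊢; linear_combination h - 3 * ht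
      have := Nat.eq_of_mul_eq_mul_left hn hc; omega
    · exact Or.inr (keyD_aux n j l r 1 hn (by norm_num) (by decide) h)
    · exact Or.inr (keyD_aux n j l r 3 hn (by norm_num) (by decide) h)
    · exact Or.inr (keyD_aux n j l r 7 hn (by norm_num) (by decide) h)
    · exact Or.inr (keyD_aux n j l r 9 hn (by norm_num) (by decide) h)

lemma keyB (n j : ℕ) [NeZero n] :
    (∃ w : ZMod n → ℝ, w ≠ 0 ∧ ∀ i : ZMod n,
        w (i + (3 * j : ℕ)) + w (i - (3 * j : ℕ)) + w (i + (j : ℕ)) + w (i - (j : ℕ)) = w i) ↔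
    (∃ w : ZMod n → ℂ, w ≠ 0 ∧ ∀ i : ZMod n,
        w (i + (3 * j : ℕ)) + w (i - (3 * j : ℕ)) + w (i + (j : ℕ)) + w (i - (j : ℕ)) = w i) := by
  constructor
  · rintro ⟨w, hw0, hw⟩
    refine ⟨fun i => (w i : ℂ), ?_, fun i => ?_⟩
    · intro h
      apply hw0
      funext i
      have := congrFun h i
      simpa using this
    · show ((w (i + (3 * j : ℕ)) : ℝ) : ℂ) + ((w (i - (3 * j : ℕ)) : ℝ) : ℂ)
          + ((w (i + (j : ℕ)) : ℝ) : ℂ) + ((w (i - (j : ℕ)) : ℝ) : ℂ) = ((w i : ℝ) : ℂ)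
      exact_mod_cast congrArg (fun x : ℝ => (x : ℂ)) (hw i)
  · rintro ⟨w, hw0, hw⟩
    have hex : ∃ i, w i ≠ 0 := by
      by_contra hc
      push_neg at hc
      exact hw0 (funext hc)
    obtain ⟨i0, hi0⟩ := hex
    have hre : ∀ i : ZMod n, (w (i + (3 * j : ℕ))).re + (w (i - (3 * j : ℕ))).re
        + (w (i + (j : ℕ))).re + (w (i - (j : ℕ))).re = (w i).re := by
      intro i
      have := congrArg Complex.re (hw i)
      simpa using this
    have him : ∀ i : ZMod n, (w (i + (3 * j : ℕ))).im + (w (i - (3 * j : ℕ))).im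
        + (w (i + (j : ℕ))).im + (w (i - (j : ℕ))).im = (w i).im := by
      intro i
      have := congrArg Complex.im (hw i)
      simpa using this
    by_cases h : (w i0).re ≠ 0
    · exact ⟨fun i => (w i).re, fun hc => h (congrFun hc i0), hre⟩
    · push_neg at h
      have him0 : (w i0).im ≠ 0 := by
        intro hc
        exact hi0 (Complex.ext h hc)
      exact ⟨fun i => (w i).im, fun hc => him0 (congrFun hc i0), him⟩

section
variable {n : ℕ} [NeZero n]

-- the two-point indicator sum
lemma sum_pair_ite {c : ZMod n} (hc : c ≠ 0) (hcc : c + c ≠ 0) (i : ZMod n) (f : ZMod n → ℝ) :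
    (∑ i' : ZMod n, (if (i ≠ i' ∧ (i' - i = c ∨ i - i' = c)) then (1:ℝ) else 0) * f i')
      = f (i + c) + f (i - c) := by
  have hcond : ∀ i' : ZMod n,
      (i ≠ i' ∧ (i' - i = c ∨ i - i' = c)) ↔ (i' = i + c ∨ i' = i - c) := by
    intro i'
    constructor
    · rintro ⟨hne, h | h⟩
      · left; rw [← h]; ring
      · right; rw [← h]; ring
    · rintro (rfl | rfl)
      · exact ⟨fun hh => hc (left_eq_add.mp hh), Or.inl (by ring)⟩
      · refine ⟨fun hh => hc ?_, Or.inr (by ring)⟩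
        have h2 : i - (i - c) = 0 := by rw [← hh]; ring
        rw [sub_sub_cancel] at h2
        exact h2
  have hab : i + c ≠ i - c := by
    intro hh
    apply hcc
    have : (i + c) - (i - c) = 0 := by rw [hh]; ring
    rw [← this]; ring
  have hpt : ∀ i' : ZMod n,
      (if (i ≠ i' ∧ (i' - i = c ∨ i - i' = c)) then (1:ℝ) else 0) * f i'
        = (if i' = i + c then f i' else 0) + (if i' = i - c then f i' else 0) := by
    intro i'
    rw [if_congr (hcond i') rfl rfl]
    by_cases h1 : i' = i + c
    · rw [if_pos (Or.inl h1), if_pos h1, if_neg (by rw [h1]; exact hab), one_mul, add_zero]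
    · by_cases h2 : i' = i - c
      · rw [if_pos (Or.inr h2), if_pos h2, if_neg h1, one_mul, zero_add]
      · rw [if_neg (by tauto), if_neg h1, if_neg h2, zero_mul, add_zero]
  rw [Finset.sum_congr rfl fun i' _ => hpt i', Finset.sum_add_distrib,
    Finset.sum_ite_eq' Finset.univ (i + c) f, Finset.sum_ite_eq' Finset.univ (i - c) f]
  simp

lemma mulVec_inl (j : ℕ) (h2j : ((2 * j : ℕ) : ZMod n) ≠ 0)
    (h4j : ((2 * j : ℕ) : ZMod n) + ((2 * j : ℕ) : ZMod n) ≠ 0)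
    (v : (ZMod n ⊕ ZMod n) → ℝ) (i : ZMod n) :
    ((IGraph n j (2 * j)).adjMatrix ℝ *ᵥ v) (Sum.inl i)
      = v (Sum.inl (i + (2 * j : ℕ))) + v (Sum.inl (i - (2 * j : ℕ))) + v (Sum.inr i) := by
  show ∑ y : ZMod n ⊕ ZMod n, (IGraph n j (2 * j)).adjMatrix ℝ (Sum.inl i) y * v y = _
  rw [Fintype.sum_sum_type]
  have h1 : ∀ i' : ZMod n, (IGraph n j (2 * j)).adjMatrix ℝ (Sum.inl i) (Sum.inl i')
      = if (i ≠ i' ∧ (i' - i = ((2 * j : ℕ) : ZMod n) ∨ i - i' = ((2 * j : ℕ) : ZMod n)))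
        then 1 else 0 := fun i' => rfl
  have h2 : ∀ i' : ZMod n, (IGraph n j (2 * j)).adjMatrix ℝ (Sum.inl i) (Sum.inr i')
      = if i = i' then 1 else 0 := fun i' => rfl
  simp only [h1, h2]
  rw [sum_pair_ite h2j h4j i (fun x => v (Sum.inl x))]
  simp only [ite_mul, one_mul, zero_mul, Finset.sum_ite_eq, Finset.mem_univ, if_true]

lemma mulVec_inr (j : ℕ) (h1j : ((j : ℕ) : ZMod n) ≠ 0)
    (h2j : ((j : ℕ) : ZMod n) + ((j : ℕ) : ZMod n) ≠ 0)
    (v : (ZMod n ⊕ ZMod n) → ℝ) (i : ZMod n) :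
    ((IGraph n j (2 * j)).adjMatrix ℝ *ᵥ v) (Sum.inr i)
      = v (Sum.inr (i + (j : ℕ))) + v (Sum.inr (i - (j : ℕ))) + v (Sum.inl i) := by
  show ∑ y : ZMod n ⊕ ZMod n, (IGraph n j (2 * j)).adjMatrix ℝ (Sum.inr i) y * v y = _
  rw [Fintype.sum_sum_type]
  have h1 : ∀ i' : ZMod n, (IGraph n j (2 * j)).adjMatrix ℝ (Sum.inr i) (Sum.inr i')
      = if (i ≠ i' ∧ (i' - i = ((j : ℕ) : ZMod n) ∨ i - i' = ((j : ℕ) : ZMod n)))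
        then 1 else 0 := fun i' => rfl
  have h2 : ∀ i' : ZMod n, (IGraph n j (2 * j)).adjMatrix ℝ (Sum.inr i) (Sum.inl i')
      = if i = i' then 1 else 0 := fun i' => rfl
  simp only [h1, h2]
  rw [sum_pair_ite h1j h2j i (fun x => v (Sum.inr x))]
  simp only [ite_mul, one_mul, zero_mul, Finset.sum_ite_eq, Finset.mem_univ, if_true]
  ring

end

lemma keyA (n j : ℕ) [NeZero n] (hj : 1 ≤ j) (hk : 2 * (2 * j) < n) :
    (∃ v : (ZMod n ⊕ ZMod n) → ℝ, v ≠ 0 ∧ (IGraph n j (2 * j)).adjMatrix ℝ *ᵥ v = 0) ↔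
    (∃ w : ZMod n → ℝ, w ≠ 0 ∧ ∀ i : ZMod n,
        w (i + (3 * j : ℕ)) + w (i - (3 * j : ℕ)) + w (i + (j : ℕ)) + w (i - (j : ℕ)) = w i) := by
  have hne : ∀ m : ℕ, 0 < m → m < n → ((m : ℕ) : ZMod n) ≠ 0 := by
    intro m h0 hm hc
    rw [ZMod.natCast_eq_zero_iff] at hc
    exact absurd (Nat.le_of_dvd h0 hc) (by omega)
  have h1j : ((j : ℕ) : ZMod n) ≠ 0 := hne j (by omega) (by omega)
  have h2j : ((2 * j : ℕ) : ZMod n) ≠ 0 := hne (2 * j) (by omega) (by omega)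
  have h4j : ((2 * j : ℕ) : ZMod n) + ((2 * j : ℕ) : ZMod n) ≠ 0 := by
    have : ((2 * j : ℕ) : ZMod n) + ((2 * j : ℕ) : ZMod n) = ((4 * j : ℕ) : ZMod n) := by
      push_cast; ring
    rw [this]; exact hne (4 * j) (by omega) (by omega)
  have h2jsum : ((j : ℕ) : ZMod n) + ((j : ℕ) : ZMod n) ≠ 0 := by
    have : ((j : ℕ) : ZMod n) + ((j : ℕ) : ZMod n) = ((2 * j : ℕ) : ZMod n) := by
      push_cast; ring
    rw [this]; exact h2j
  have e1 : ∀ i : ZMod n, i + (j : ℕ) + (2 * j : ℕ) = i + (3 * j : ℕ) := by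
    intro i; push_cast; ring
  have e2 : ∀ i : ZMod n, i + (j : ℕ) - (2 * j : ℕ) = i - (j : ℕ) := by
    intro i; push_cast; ring
  have e3 : ∀ i : ZMod n, i - (j : ℕ) + (2 * j : ℕ) = i + (j : ℕ) := by
    intro i; push_cast; ring
  have e4 : ∀ i : ZMod n, i - (j : ℕ) - (2 * j : ℕ) = i - (3 * j : ℕ) := by
    intro i; push_cast; ring
  constructor
  · rintro ⟨v, hv0, hker⟩
    have E1 : ∀ i : ZMod n,
        v (.inl (i + (2 * j : ℕ))) + v (.inl (i - (2 * j : ℕ))) + v (.inr i) = 0 := by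
      intro i
      have h := congrFun hker (Sum.inl i)
      rw [Pi.zero_apply, mulVec_inl j h2j h4j v i] at h
      exact h
    have E2 : ∀ i : ZMod n,
        v (.inr (i + (j : ℕ))) + v (.inr (i - (j : ℕ))) + v (.inl i) = 0 := by
      intro i
      have h := congrFun hker (Sum.inr i)
      rw [Pi.zero_apply, mulVec_inr j h1j h2jsum v i] at h
      exact h
    refine ⟨fun i => v (.inl i), ?_, ?_⟩
    · intro hw
      have hw' : ∀ a : ZMod n, v (.inl a) = 0 := fun a => by simpa using congrFun hw a
      apply hv0
      funext x
      cases x with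
      | inl i => exact hw' i
      | inr i =>
        have h := E1 i
        rw [hw', hw'] at h
        simpa using h
    · intro i
      have hinr : ∀ a : ZMod n,
          v (.inr a) = -(v (.inl (a + (2 * j : ℕ))) + v (.inl (a - (2 * j : ℕ)))) := by
        intro a; linarith [E1 a]
      have h := E2 i
      rw [hinr, hinr, e1, e2, e3, e4] at h
      show v (.inl (i + (3 * j : ℕ))) + v (.inl (i - (3 * j : ℕ)))
        + v (.inl (i + (j : ℕ))) + v (.inl (i - (j : ℕ))) = v (.inl i)
      linarith
  · rintro ⟨w, hw0, hw⟩
    refine ⟨Sum.elim w (fun a => -(w (a + (2 * j : ℕ)) + w (a - (2 * j : ℕ)))), ?_, ?_⟩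
    · intro hc
      apply hw0
      funext i
      simpa using congrFun hc (Sum.inl i)
    · funext x
      rw [Pi.zero_apply]
      cases x with
      | inl i =>
        rw [mulVec_inl j h2j h4j]
        simp only [Sum.elim_inl, Sum.elim_inr]
        ring
      | inr i =>
        rw [mulVec_inr j h1j h2jsum]
        simp only [Sum.elim_inl, Sum.elim_inr]
        rw [e1, e2, e3, e4]
        linarith [hw i]

/-- Zero is an eigenvalue of the I-graph `I(n,j,2j)` iff there exist integers
`0 ≤ l ≤ n-1` and `r ≥ 0` with `3jl = n(1+3r)`, `3jl = n(2+3r)`, `10jl = n(1+10r)`,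
`10jl = n(3+10r)`, `10jl = n(7+10r)` or `10jl = n(9+10r)`. -/
theorem IGraph_zero_eigenvalue_iff (n j : ℕ) [NeZero n] (hn : 3 ≤ n) (hj : 1 ≤ j)
    (hk : 2 * (2 * j) < n) :
    (∃ v : (ZMod n ⊕ ZMod n) → ℝ, v ≠ 0 ∧ (IGraph n j (2 * j)).adjMatrix ℝ *ᵥ v = 0) ↔
    ∃ l r : ℕ, l ≤ n - 1 ∧
      (3 * j * l = n * (1 + 3 * r) ∨ 3 * j * l = n * (2 + 3 * r) ∨
       10 * j * l = n * (1 + 10 * r) ∨ 10 * j * l = n * (3 + 10 * r) ∨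
       10 * j * l = n * (7 + 10 * r) ∨ 10 * j * l = n * (9 + 10 * r)) := by
  rw [keyA n j hj hk, keyB n j, keyC n j]
  constructor
  · rintro ⟨l, hl, hQ⟩
    exact (keyD n j).mp ⟨l, hl, (Qcond_iff n j l).mp hQ⟩
  · intro h
    obtain ⟨l, hl, hd⟩ := (keyD n j).mpr h
    exact ⟨l, hl, (Qcond_iff n j l).mpr hd⟩
end
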